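/- arXiv:1601.08115 — 3 statements merged into one kernel-verified Lean document; each statement's English description precedes it below -/
import Mathlib

section
/- Let H be a hyperplane of the k-Grassmannian of V and let 1 ≤ i < k. Then the i-radical R_i(H), consisting of all i-dimensional subspaces X of V such that every k-dimensional subspace containing X belongs to H, is a subspace of the i-Grassmannian: if two distinct members X₁, X₂ of R_i(H) lie on a common line ℓ_{Y,Z} of the i-Grassmannian, then every member of ℓ_{Y,Z} belongs to R_i(H). -/
/-!
Let `X` lie on the line and `U ⊇ X` be a `k`-space; if `Z ≤ U`, then `X₁ ≤ U` and we are done.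
Otherwise `U ⊓ Z = X`, so a complement `C` of `X` in `U` meets `Z` trivially: the spaces
`Xⱼ ⊔ C` are `k`-spaces through `Xⱼ`, hence in `H`, and both contain the `(k-1)`-space
`D = Y ⊔ C`. For a basis `d` of `D` the form `w ↦ α (w, d)` is linear, so it vanishes on
`(X₁ ⊔ C) ⊔ (X₂ ⊔ C) = Z ⊔ C ⊇ U` (the distinct hyperplanes `X₁`, `X₂` of `Z` span `Z`); picking `u ∈ U \ D`, `(u, d)` is a basis of `U` on which
`α` vanishes, hence `α` vanishes on `U`.
-/

open Module Submodule

section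

variable {K V : Type*} [Field K] [AddCommGroup V] [Module K V]

namespace Submodule

theorem finrank_sup_of_disjoint [FiniteDimensional K V] {P C : Submodule K V} (h : Disjoint P C) :
    finrank K ↥(P ⊔ C) = finrank K P + finrank K C := by
  rw [← finrank_sup_add_finrank_inf_eq, h.eq_bot, finrank_bot, add_zero]

theorem covBy_of_finrank_eq_add_one [FiniteDimensional K V] {X Z : Submodule K V} (hXZ : X ≤ Z)
    (h : finrank K Z = finrank K X + 1) : X ⋖ Z := by
  refine ⟨lt_of_le_of_ne hXZ (by rintro rfl; omega), fun P hXP hPZ => ?_⟩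
  have := finrank_lt_finrank_of_lt hXP
  have := finrank_lt_finrank_of_lt hPZ
  omega

theorem exists_le_disjoint_sup_eq {X U : Submodule K V} (h : X ≤ U) :
    ∃ C ≤ U, Disjoint X C ∧ X ⊔ C = U := by
  obtain ⟨W, hW⟩ := exists_isCompl X
  refine ⟨W ⊓ U, inf_le_right, hW.disjoint.mono_right inf_le_left, ?_⟩
  rw [← sup_inf_assoc_of_le W h, hW.sup_eq_top, top_inf_eq]

end Submodule

theorem CovBy.disjoint_of_not_le {α : Type*} [Lattice α] [OrderBot α] {X Z U C : α} (h : X ⋖ Z)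
    (hXU : X ≤ U) (hZU : ¬Z ≤ U) (hCU : C ≤ U) (hXC : Disjoint X C) : Disjoint Z C := by
  have hZU_eq : Z ⊓ U = X :=
    (h.eq_or_eq (le_inf h.le hXU) inf_le_left).resolve_right fun e => hZU (e ▸ inf_le_right)
  have : Z ⊓ C ≤ X ⊓ C := hZU_eq ▸ le_inf (inf_le_inf_left Z hCU) inf_le_right
  exact disjoint_iff_inf_le.mpr (this.trans hXC.le_bot)

namespace AlternatingMap

variable {N : Type*} [AddCommGroup N] [Module K N]

def VanishesOn {ι : Type*} (α : V [⋀^ι]→ₗ[K] N) (T : Submodule K V) : Prop :=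
  ∀ v : ι → V, (∀ j, v j ∈ T) → α v = 0

theorem vanishesOn_of_linearIndependent {ι : Type*} [Fintype ι] (α : V [⋀^ι]→ₗ[K] K)
    {U : Submodule K V} [FiniteDimensional K U] {v : ι → V} (hv : LinearIndependent K v)
    (hvU : ∀ j, v j ∈ U) (hcard : Fintype.card ι = finrank K U) (hα : α v = 0) :
    α.VanishesOn U := by
  let v' : ι → U := fun j => ⟨v j, hvU j⟩
  have hv' : LinearIndependent K v' := LinearIndependent.of_comp U.subtype hv
  have hαU : α.compLinearMap U.subtype = 0 :=
    (map_basis_eq_zero_iff (basisOfLinearIndependentOfCardEqFinrank' v' hv' hcard) _).mp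
      (by simpa [v'] using hα)
  intro w hw
  simpa using congr($hαU fun j => (⟨w j, hw j⟩ : U))

theorem vanishesOn_of_forall_cons {m : ℕ} (α : V [⋀^Fin (m + 1)]→ₗ[K] K) {U : Submodule K V}
    [FiniteDimensional K U] (hU : finrank K U = m + 1) {d : Fin m → V}
    (hd : LinearIndependent K d) (hdU : ∀ j, d j ∈ U) (hα : ∀ w ∈ U, α (Fin.cons w d) = 0) :
    α.VanishesOn U := by
  have hlt : span K (Set.range d) < U := by
    refine lt_of_le_of_ne (span_le.mpr (Set.range_subset_iff.mpr hdU)) fun h => ?_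
    have := finrank_span_eq_card hd
    rw [h, hU, Fintype.card_fin] at this
    omega
  obtain ⟨u, huU, hu⟩ := SetLike.exists_of_lt hlt
  exact vanishesOn_of_linearIndependent α (linearIndependent_finCons.mpr ⟨hd, hu⟩)
    (Fin.cases huU hdU) (by simp [hU]) (hα u huU)

theorem cons_eq_zero_of_mem_sup {m : ℕ} (α : V [⋀^Fin (m + 1)]→ₗ[K] N) {T₁ T₂ : Submodule K V}
    (h₁ : α.VanishesOn T₁) (h₂ : α.VanishesOn T₂) {d : Fin m → V} (hd₁ : ∀ j, d j ∈ T₁)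
    (hd₂ : ∀ j, d j ∈ T₂) {w : V} (hw : w ∈ T₁ ⊔ T₂) : α (Fin.cons w d) = 0 := by
  obtain ⟨w₁, hw₁, w₂, hw₂, rfl⟩ := mem_sup.mp hw
  rw [← coe_multilinearMap, MultilinearMap.cons_add, coe_multilinearMap,
    h₁ _ (Fin.cases hw₁ hd₁), h₂ _ (Fin.cases hw₂ hd₂), add_zero]

theorem vanishesOn_of_mem_line {m : ℕ} (α : V [⋀^Fin (m + 1)]→ₗ[K] K) [FiniteDimensional K V]
    {Y X X₁ X₂ Z U : Submodule K V} (hY₁ : Y ≤ X₁) (hY₂ : Y ≤ X₂) (hYX : Y ≤ X) (hXZ : X ⋖ Z)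
    (hZ : X₁ ⊔ X₂ = Z) (hXU : X ≤ U) (hY : finrank K Y + 1 = finrank K X)
    (hX₁ : finrank K X₁ = finrank K X) (hX₂ : finrank K X₂ = finrank K X)
    (hU : finrank K U = m + 1)
    (h₁ : ∀ W : Submodule K V, finrank K W = m + 1 → X₁ ≤ W → α.VanishesOn W)
    (h₂ : ∀ W : Submodule K V, finrank K W = m + 1 → X₂ ≤ W → α.VanishesOn W) :
    α.VanishesOn U := by
  by_cases hZU : Z ≤ U
  · exact h₁ U hU ((le_sup_left.trans hZ.le).trans hZU)
  obtain ⟨C, hCU, hXC, hXCU⟩ := exists_le_disjoint_sup_eq hXU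
  have hsup : ∀ P ≤ Z, finrank K ↥(P ⊔ C) = finrank K P + finrank K C := fun P hP =>
    finrank_sup_of_disjoint ((hXZ.disjoint_of_not_le hXU hZU hCU hXC).mono_left hP)
  have hC : finrank K X + finrank K C = m + 1 := by
    rw [← hU, ← hXCU, finrank_sup_of_disjoint hXC]
  have hD : finrank K ↥(Y ⊔ C) = m := by
    rw [hsup Y (hYX.trans hXZ.le)]
    omega
  let b := finBasisOfFinrankEq K ↥(Y ⊔ C) hD
  refine vanishesOn_of_forall_cons α hU (b.linearIndependent.map' _ (ker_subtype _))
    (fun j => hXCU ▸ sup_le_sup_right hYX C (b j).2) fun w hw => ?_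
  have hUZC : U ≤ (X₁ ⊔ C) ⊔ (X₂ ⊔ C) := by
    rw [sup_sup_sup_comm, sup_idem, hZ, ← hXCU]
    exact sup_le_sup_right hXZ.le C
  refine cons_eq_zero_of_mem_sup α (h₁ _ ?_ le_sup_left) (h₂ _ ?_ le_sup_left)
    (fun j => sup_le_sup_right hY₁ C (b j).2) (fun j => sup_le_sup_right hY₂ C (b j).2) (hUZC hw)
  · rw [hsup X₁ (hZ ▸ le_sup_left)]
    omega
  · rw [hsup X₂ (hZ ▸ le_sup_right)]
    omega

end AlternatingMap

end

theorem stmt_3_general (K V : Type*) [Field K] [AddCommGroup V] [Module K V] [FiniteDimensional K V]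
    (k i : ℕ)
    (hi1 : 1 ≤ i) (hik : i < k)
    (α : AlternatingMap K V K (Fin k))
    (H : Set (Submodule K V))
    (hH : H = {X : Submodule K V | finrank K X = k ∧ ∀ v : Fin k → V, (∀ j, v j ∈ X) → α v = 0})
    (Ri : Set (Submodule K V))
    (hRi : Ri = {X : Submodule K V | finrank K X = i ∧
      ∀ U : Submodule K V, finrank K U = k → X ≤ U → U ∈ H})
    (Y Z : Submodule K V) (hY : finrank K Y = i - 1) (hZ : finrank K Z = i + 1)
    (X₁ X₂ : Submodule K V)
    (hX₁ : Y ≤ X₁ ∧ X₁ ≤ Z ∧ finrank K X₁ = i)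
    (hX₂ : Y ≤ X₂ ∧ X₂ ≤ Z ∧ finrank K X₂ = i)
    (hne : X₁ ≠ X₂) (h₁ : X₁ ∈ Ri) (h₂ : X₂ ∈ Ri) :
    ∀ X : Submodule K V, Y ≤ X → X ≤ Z → finrank K X = i → X ∈ Ri := by
  subst hH hRi
  obtain ⟨m, rfl⟩ : ∃ m, k = m + 1 := ⟨k - 1, by omega⟩
  obtain ⟨hY₁, hX₁Z, hX₁⟩ := hX₁
  obtain ⟨hY₂, hX₂Z, hX₂⟩ := hX₂
  have hcov : ∀ {X : Submodule K V}, X ≤ Z → finrank K X = i → X ⋖ Z := fun hXZ hX =>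
    covBy_of_finrank_eq_add_one hXZ (by omega)
  have hX₁X₂ : X₁ ⊔ X₂ = Z := (hcov hX₁Z hX₁).wcovBy.sup_eq (hcov hX₂Z hX₂).wcovBy hne
  intro X hYX hXZ hX
  refine ⟨hX, fun U hU hXU => ⟨hU, ?_⟩⟩
  exact α.vanishesOn_of_mem_line hY₁ hY₂ hYX (hcov hXZ hX) hX₁X₂ hXU (by omega) (by omega)
    (by omega) hU (fun W hW hXW => (h₁.2 W hW hXW).2) (fun W hW hXW => (h₂.2 W hW hXW).2)

/-- The `i`-radical `R_i(H)` of a hyperplane `H` of the `k`-Grassmannian is a subspace of the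
`i`-Grassmannian: if two distinct members of `R_i(H)` lie on a common line `ℓ_{Y,Z}`, then
every member of `ℓ_{Y,Z}` belongs to `R_i(H)`. -/
theorem stmt_3 (K V : Type*) [Field K] [AddCommGroup V] [Module K V] [FiniteDimensional K V]
    (n k i : ℕ) (hn : finrank K V = n) (hk : 2 ≤ k) (hkn : k < n)
    (hi1 : 1 ≤ i) (hik : i < k)
    (α : AlternatingMap K V K (Fin k)) (hα : α ≠ 0)
    (H : Set (Submodule K V))
    (hH : H = {X : Submodule K V | finrank K X = k ∧ ∀ v : Fin k → V, (∀ j, v j ∈ X) → α v = 0})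
    (Ri : Set (Submodule K V))
    (hRi : Ri = {X : Submodule K V | finrank K X = i ∧
      ∀ U : Submodule K V, finrank K U = k → X ≤ U → U ∈ H})
    (Y Z : Submodule K V) (hY : finrank K Y = i - 1) (hZ : finrank K Z = i + 1) (hYZ : Y ≤ Z)
    (X₁ X₂ : Submodule K V)
    (hX₁ : Y ≤ X₁ ∧ X₁ ≤ Z ∧ finrank K X₁ = i)
    (hX₂ : Y ≤ X₂ ∧ X₂ ≤ Z ∧ finrank K X₂ = i)
    (hne : X₁ ≠ X₂) (h₁ : X₁ ∈ Ri) (h₂ : X₂ ∈ Ri) :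
    ∀ X : Submodule K V, Y ≤ X → X ≤ Z → finrank K X = i → X ∈ Ri :=
  stmt_3_general K V k i hi1 hik α H hH Ri hRi Y Z hY hZ X₁ X₂ hX₁ hX₂ hne h₁ h₂
end

section
/- With E(H₀) the expansion to V of a hyperplane H₀ of the (k−1)-Grassmannian of a hyperplane V₀ of V, the lower radicals coincide: a 1-dimensional subspace p of V satisfies 'every k-subspace of V containing p is in E(H₀)' if and only if p ⊆ V₀ and every (k−1)-subspace of V₀ containing p lies in H₀. -/
open Module

/-- `H` is a hyperplane of the `k`-Grassmannian of the subspace `W` of `V`. -/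
def IsGrassHyperplane {K V : Type*} [Field K] [AddCommGroup V] [Module K V]
    (W : Submodule K V) (k : ℕ) (H : Set (Submodule K V)) : Prop :=
  (∀ X ∈ H, X ≤ W ∧ finrank K X = k) ∧
  (∃ X : Submodule K V, X ≤ W ∧ finrank K X = k ∧ X ∉ H) ∧
  (∀ Y Z : Submodule K V, Z ≤ W → finrank K Y = k - 1 → finrank K Z = k + 1 → Y ≤ Z →
    ({X : Submodule K V | Y ≤ X ∧ X ≤ Z ∧ finrank K X = k} ⊆ H ∨
      ∃ X₀ : Submodule K V,
        {X : Submodule K V | Y ≤ X ∧ X ≤ Z ∧ finrank K X = k} ∩ H = {X₀}))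

/-! A `k`-space `Y ⊔ q` with `Y ≤ V₀` and `q` a point outside `V₀` meets `V₀` exactly in `Y`
(modular law), so it lies in `E(H₀)` iff `Y ∈ H₀`. Taking `q = p` and some `Y ∉ H₀` forces
`p ≤ V₀`; then any point `q ∉ V₀` puts every `(k-1)`-space of `V₀` through `p` into `H₀`.
Conversely, a `k`-space through `p ≤ V₀` not inside `V₀` meets `V₀` in a `(k-1)`-space
through `p`. -/

theorem mem_of_sup_isAtom_mem {α : Type*} [Lattice α] [OrderBot α] [IsModularLattice α]
    {S : Set α} {W Y q : α} (hY : Y ≤ W) (hq : IsAtom q) (hqW : ¬ q ≤ W)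
    (h : Y ⊔ q ≤ W ∨ (Y ⊔ q) ⊓ W ∈ S) : Y ∈ S := by
  rcases h with h | h
  · exact absurd (le_sup_right.trans h) hqW
  · rwa [sup_inf_assoc_of_le q hY, (hq.not_le_iff_disjoint.mp hqW).eq_bot, sup_bot_eq] at h

namespace Submodule

variable {K V : Type*} [DivisionRing K] [AddCommGroup V] [Module K V]

theorem finrank_sup_of_isAtom [FiniteDimensional K V] {Y q : Submodule K V} (hq : IsAtom q)
    (hqY : ¬ q ≤ Y) : finrank K ↥(Y ⊔ q) = finrank K Y + 1 := by
  have h := finrank_sup_add_finrank_inf_eq Y q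
  rw [(hq.not_le_iff_disjoint.mp hqY).symm.eq_bot, finrank_bot, isAtom_iff_finrank_eq_one.mp hq]
    at h
  omega

theorem finrank_inf_add_one_of_not_le [FiniteDimensional K V] {W X : Submodule K V}
    (hW : finrank K W + 1 = finrank K V) (hX : ¬ X ≤ W) :
    finrank K ↥(X ⊓ W) + 1 = finrank K X := by
  have hlt := finrank_lt_finrank_of_lt (right_lt_sup.mpr hX)
  have hle := finrank_le (X ⊔ W)
  have h := finrank_sup_add_finrank_inf_eq X W
  omega

end Submodule

theorem stmt_12_general (K V : Type*) [Field K] [AddCommGroup V] [Module K V] [FiniteDimensional K V]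
    (n k : ℕ) (hn : finrank K V = n) (hk : 3 ≤ k)
    (V₀ : Submodule K V) (hV₀ : finrank K V₀ + 1 = n)
    (H₀ : Set (Submodule K V)) (hH₀ : IsGrassHyperplane V₀ (k - 1) H₀)
    (E : Set (Submodule K V))
    (hE : E = {X : Submodule K V | finrank K X = k ∧ (X ≤ V₀ ∨ X ⊓ V₀ ∈ H₀)})
    (p : Submodule K V) (hp : finrank K p = 1) :
    (∀ X : Submodule K V, finrank K X = k → p ≤ X → X ∈ E) ↔
      (p ≤ V₀ ∧ ∀ Y : Submodule K V, Y ≤ V₀ → finrank K Y = k - 1 → p ≤ Y → Y ∈ H₀) := by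
  subst hE hn
  constructor
  · intro hall
    have hmem : ∀ Y ≤ V₀, finrank K Y = k - 1 → ∀ q, IsAtom q → ¬ q ≤ V₀ → p ≤ Y ⊔ q →
        Y ∈ H₀ := fun Y hY hYk q hq hqV₀ hpYq =>
      mem_of_sup_isAtom_mem hY hq hqV₀ (hall _ (by
        rw [Submodule.finrank_sup_of_isAtom hq fun h => hqV₀ (h.trans hY), hYk]; omega) hpYq).2
    have hpV₀ : p ≤ V₀ := by
      by_contra hpV₀
      obtain ⟨Y, hY, hYk, hYH₀⟩ := hH₀.2.1
      exact hYH₀ (hmem Y hY hYk p (Submodule.isAtom_iff_finrank_eq_one.mpr hp) hpV₀ le_sup_right)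
    have hV₀top : ¬ ⊤ ≤ V₀ := fun h => by
      rw [top_le_iff.mp h, finrank_top] at hV₀; omega
    obtain ⟨q, hq, -, hqV₀⟩ : ∃ q, IsAtom q ∧ q ≤ ⊤ ∧ ¬ q ≤ V₀ := by
      simpa using mt le_iff_atom_le_imp.mpr hV₀top
    exact ⟨hpV₀, fun Y hY hYk hpY => hmem Y hY hYk q hq hqV₀ (hpY.trans le_sup_left)⟩
  · rintro ⟨hpV₀, hH₀p⟩ X hXk hpX
    refine ⟨hXk, or_iff_not_imp_left.mpr fun hX => hH₀p _ inf_le_right ?_ (le_inf hpX hpV₀)⟩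
    have := Submodule.finrank_inf_add_one_of_not_le hV₀ hX
    omega

/-- Lower radicals coincide under expansion: a `1`-subspace `p` of `V` has all `k`-subspaces
through it in `E(H₀)` iff `p ⊆ V₀` and all `(k-1)`-subspaces of `V₀` through `p` are in
`H₀`. -/
theorem stmt_12 (K V : Type*) [Field K] [AddCommGroup V] [Module K V] [FiniteDimensional K V]
    (n k : ℕ) (hn : finrank K V = n) (hn4 : 4 ≤ n) (hk : 3 ≤ k) (hkn : k < n)
    (V₀ : Submodule K V) (hV₀ : finrank K V₀ + 1 = n)
    (H₀ : Set (Submodule K V)) (hH₀ : IsGrassHyperplane V₀ (k - 1) H₀)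
    (E : Set (Submodule K V))
    (hE : E = {X : Submodule K V | finrank K X = k ∧ (X ≤ V₀ ∨ X ⊓ V₀ ∈ H₀)})
    (p : Submodule K V) (hp : finrank K p = 1) :
    (∀ X : Submodule K V, finrank K X = k → p ≤ X → X ∈ E) ↔
      (p ≤ V₀ ∧ ∀ Y : Submodule K V, Y ≤ V₀ → finrank K Y = k - 1 → p ≤ Y → Y ∈ H₀) :=
  stmt_12_general K V n k hn hk V₀ hV₀ H₀ hH₀ E hE p hp
end

section
/- Let k = 3, H₀ a hyperplane of the 2-Grassmannian of a hyperplane V₀ of V whose associated symplectic polar space S(H₀) is non-degenerate (its radical is empty). Then the upper radical of the expansion E(H₀) equals H₀: a 2-dimensional subspace A of V satisfies 'every 3-subspace of V containing A lies in E(H₀)' if and only if A ∈ H₀. -/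
open Module

/-!
A `3`-subspace `U ⊄ V₀` meets the hyperplane `V₀` in a `2`-subspace, so `U ∈ E(H₀)` says that
`U ⊓ V₀` is totally isotropic. If `A ≤ V₀`, then `A = U ⊓ V₀` for every such `U ⊇ A`, which gives
both directions. If `A ⊄ V₀`, then `A ⊓ V₀ = K ∙ a` with `a ≠ 0`, and each `y ∈ V₀ \ A` lies in
`(A ⊔ K ∙ y) ⊓ V₀ ∋ a`; if all these planes were totally isotropic, `a` would lie in the radical
of `β`.
-/

namespace Submodule

variable {K V : Type*} [Field K] [AddCommGroup V] [Module K V] [FiniteDimensional K V]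
  {V₀ p : Submodule K V}

theorem sup_eq_top_of_not_le_of_finrank_add_one (hV₀ : finrank K V₀ + 1 = finrank K V)
    (hp : ¬p ≤ V₀) : p ⊔ V₀ = ⊤ := by
  apply eq_top_of_finrank_eq
  have hlt : finrank K V₀ < finrank K ↥(p ⊔ V₀) := finrank_lt_finrank_of_lt (right_lt_sup.mpr hp)
  have hle : finrank K ↥(p ⊔ V₀) ≤ finrank K V := finrank_le _
  omega

theorem finrank_inf_add_one_of_not_le_s13 (hV₀ : finrank K V₀ + 1 = finrank K V) (hp : ¬p ≤ V₀) :
    finrank K ↥(p ⊓ V₀) + 1 = finrank K p := by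
  have := finrank_sup_add_finrank_inf_eq p V₀
  rw [sup_eq_top_of_not_le_of_finrank_add_one hV₀ hp, finrank_top] at this
  omega

theorem inf_eq_of_le_of_finrank_eq_add_one (hV₀ : finrank K V₀ + 1 = finrank K V)
    {A U : Submodule K V} (hAV₀ : A ≤ V₀) (hAU : A ≤ U) (hU : ¬U ≤ V₀)
    (hUA : finrank K U = finrank K A + 1) : U ⊓ V₀ = A :=
  (eq_of_le_of_finrank_eq (le_inf hAU hAV₀) <| by
    have := finrank_inf_add_one_of_not_le_s13 hV₀ hU
    omega).symm

theorem exists_inf_eq_span_singleton_of_not_le (hV₀ : finrank K V₀ + 1 = finrank K V)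
    (hp : ¬p ≤ V₀) (hp2 : finrank K p = 2) : ∃ a : V₀, a ≠ 0 ∧ p ⊓ V₀ = K ∙ (a : V) := by
  have h1 : finrank K ↥(p ⊓ V₀) = 1 := by
    have := finrank_inf_add_one_of_not_le_s13 hV₀ hp
    omega
  obtain ⟨a, ha, ha0⟩ := exists_mem_ne_zero_of_ne_bot (p := p ⊓ V₀) fun h ↦ by
    rw [← finrank_eq_zero] at h
    omega
  exact ⟨⟨a, ha.2⟩, fun h ↦ ha0 (congrArg Subtype.val h),
    eq_span_singleton_of_mem_of_finrank_eq_one h1 ha ha0⟩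

end Submodule

section Isotropic

variable {K V : Type*} [Field K] [AddCommGroup V] [Module K V] {V₀ : Submodule K V}

def IsTotallyIsotropic (β : V₀ →ₗ[K] V₀ →ₗ[K] K) (X : Submodule K V) : Prop :=
  ∀ x y : V₀, (x : V) ∈ X → (y : V) ∈ X → β x y = 0

theorem eq_zero_of_forall_isTotallyIsotropic_inf {β : V₀ →ₗ[K] V₀ →ₗ[K] K}
    (halt : ∀ x : V₀, β x x = 0) (hnd : ∀ x : V₀, (∀ y : V₀, β x y = 0) → x = 0)
    {A : Submodule K V} {a : V₀} (hA : A ⊓ V₀ = K ∙ (a : V))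
    (hiso : ∀ y : V₀, (y : V) ∉ A → IsTotallyIsotropic β ((A ⊔ K ∙ (y : V)) ⊓ V₀)) : a = 0 := by
  have haA : (a : V) ∈ A ⊓ V₀ := hA ▸ Submodule.mem_span_singleton_self _
  refine hnd a fun y ↦ ?_
  by_cases hyA : (y : V) ∈ A
  · obtain ⟨c, hc⟩ := Submodule.mem_span_singleton.mp (hA ▸ ⟨hyA, y.2⟩ : (y : V) ∈ K ∙ (a : V))
    obtain rfl : c • a = y := Subtype.ext hc
    rw [map_smul, smul_eq_mul, halt, mul_zero]
  · exact hiso y hyA a y ⟨Submodule.mem_sup_left haA.1, haA.2⟩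
      ⟨Submodule.mem_sup_right (Submodule.mem_span_singleton_self _), y.2⟩

end Isotropic

theorem stmt_13_general (K V : Type*) [Field K] [AddCommGroup V] [Module K V]
    (n : ℕ) (hn : finrank K V = n)
    (V₀ : Submodule K V) (hV₀ : finrank K V₀ + 1 = n)
    (β : V₀ →ₗ[K] V₀ →ₗ[K] K) (halt : ∀ x : V₀, β x x = 0)
    (hnd : ∀ x : V₀, (∀ y : V₀, β x y = 0) → x = 0)
    (H₀ : Set (Submodule K V))
    (hH₀ : H₀ = {X : Submodule K V | X ≤ V₀ ∧ finrank K X = 2 ∧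
      ∀ x y : V₀, (x : V) ∈ X → (y : V) ∈ X → β x y = 0})
    (E : Set (Submodule K V))
    (hE : E = {X : Submodule K V | finrank K X = 3 ∧ (X ≤ V₀ ∨ X ⊓ V₀ ∈ H₀)})
    (A : Submodule K V) (hA : finrank K A = 2) :
    (∀ U : Submodule K V, finrank K U = 3 → A ≤ U → U ∈ E) ↔ A ∈ H₀ := by
  subst hH₀ hE n
  have : FiniteDimensional K V := Module.finite_of_finrank_pos (by omega)
  constructor
  · intro h
    by_cases hAV₀ : A ≤ V₀
    · obtain ⟨v, -, hv⟩ := SetLike.exists_of_lt (lt_top_iff_ne_top.mpr fun h : V₀ = ⊤ ↦ by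
        rw [h, finrank_top] at hV₀; omega)
      have hUA := Submodule.finrank_sup_span_singleton fun hvA ↦ hv (hAV₀ hvA)
      have hUV₀ : ¬A ⊔ K ∙ v ≤ V₀ := fun hle ↦
        hv (hle (Submodule.mem_sup_right (Submodule.mem_span_singleton_self v)))
      obtain ⟨-, hle | hmem⟩ := h (A ⊔ K ∙ v) (by omega) le_sup_left
      · exact absurd hle hUV₀
      · rwa [Submodule.inf_eq_of_le_of_finrank_eq_add_one hV₀ hAV₀ le_sup_left hUV₀ hUA] at hmem
    · obtain ⟨a, ha0, haA⟩ := Submodule.exists_inf_eq_span_singleton_of_not_le hV₀ hAV₀ hA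
      refine absurd (eq_zero_of_forall_isTotallyIsotropic_inf halt hnd haA fun y hyA ↦ ?_) ha0
      have hUA := Submodule.finrank_sup_span_singleton hyA
      obtain ⟨-, hle | hmem⟩ := h (A ⊔ K ∙ (y : V)) (by omega) le_sup_left
      · exact absurd (le_sup_left.trans hle) hAV₀
      · exact hmem.2.2
  · rintro hA₀ U hU hAU
    refine ⟨hU, or_iff_not_imp_left.mpr fun hUV₀ ↦ ?_⟩
    rwa [Submodule.inf_eq_of_le_of_finrank_eq_add_one hV₀ hA₀.1 hAU hUV₀ (by omega)]

/-- For `k = 3` and `H₀` the hyperplane of the 2-Grassmannian of a hyperplane `V₀` of `V`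
attached to a non-degenerate alternating bilinear form `β` on `V₀`, the upper radical of the
expansion `E(H₀)` is exactly `H₀`: a `2`-subspace `A` of `V` has every `3`-subspace through it
in `E(H₀)` iff `A ∈ H₀`. -/
theorem stmt_13 (K V : Type*) [Field K] [AddCommGroup V] [Module K V] [FiniteDimensional K V]
    (n : ℕ) (hn : finrank K V = n) (hn5 : 5 ≤ n) (hodd : Odd n)
    (V₀ : Submodule K V) (hV₀ : finrank K V₀ + 1 = n)
    (β : V₀ →ₗ[K] V₀ →ₗ[K] K) (halt : ∀ x : V₀, β x x = 0)
    (hnd : ∀ x : V₀, (∀ y : V₀, β x y = 0) → x = 0)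
    (H₀ : Set (Submodule K V))
    (hH₀ : H₀ = {X : Submodule K V | X ≤ V₀ ∧ finrank K X = 2 ∧
      ∀ x y : V₀, (x : V) ∈ X → (y : V) ∈ X → β x y = 0})
    (E : Set (Submodule K V))
    (hE : E = {X : Submodule K V | finrank K X = 3 ∧ (X ≤ V₀ ∨ X ⊓ V₀ ∈ H₀)})
    (A : Submodule K V) (hA : finrank K A = 2) :
    (∀ U : Submodule K V, finrank K U = 3 → A ≤ U → U ∈ E) ↔ A ∈ H₀ :=
  stmt_13_general K V n hn V₀ hV₀ β halt hnd H₀ hH₀ E hE A hA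
end
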